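/- Let m ≥ 2, let g₁,…,g_m : ℝⁿ → ℝⁿ be vector fields linearly independent at a point x, and let h have relative degree r at x (so L_{g_i}L_f^k h = 0 near x for all i and k ≤ r−2). Then there is no collection of n−r differentiable functions η₁,…,η_{n−r} such that simultaneously (i) the Jacobian of (ξ, η) = (h, L_f h, …, L_f^{r−1}h, η₁,…,η_{n−r}) is nonsingular at x, and (ii) L_{g_i} η_j (x) = 0 for all i, j in a neighborhood of x. -/

import Mathlib

/-- Lie derivative of a scalar function `h` along a vector field `f` on `ℝⁿ`. -/
noncomputable def LieD {n : ℕ} (f : (Fin n → ℝ) → (Fin n → ℝ))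
    (h : (Fin n → ℝ) → ℝ) : (Fin n → ℝ) → ℝ :=
  fun x => fderiv ℝ h x (f x)

/-- For `m ≥ 2` vector fields `g i` linearly independent at `x` and `h`
of relative degree `r` at `x`, there is no collection `η₁, …, η_{n-r}` of differentiable
functions such that (i) the Jacobian of `(h, L_f h, …, L_f^{r-1} h, η₁, …, η_{n-r})` is
nonsingular at `x`, and (ii) `L_{g i} η j ≡ 0` on a neighborhood of `x`. -/
theorem stmt13 (n m r : ℕ) (hm : 2 ≤ m) (hr1 : 1 ≤ r) (hrn : r ≤ n)
    (f : (Fin n → ℝ) → (Fin n → ℝ)) (hf : ContDiff ℝ (⊤ : ℕ∞) f)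
    (g : Fin m → (Fin n → ℝ) → (Fin n → ℝ)) (hg : ∀ i, ContDiff ℝ (⊤ : ℕ∞) (g i))
    (h : (Fin n → ℝ) → ℝ) (hh : ContDiff ℝ (⊤ : ℕ∞) h)
    (x : Fin n → ℝ)
    (hind : LinearIndependent ℝ (fun i => g i x))
    (hrel1 : ∃ U ∈ nhds x, ∀ y ∈ U, ∀ i : Fin m, ∀ k : ℕ, k + 2 ≤ r →
      LieD (g i) ((LieD f)^[k] h) y = 0)
    (hrel2 : ∃ i : Fin m, LieD (g i) ((LieD f)^[r - 1] h) x ≠ 0) :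
    ¬ ∃ η : Fin (n - r) → ((Fin n → ℝ) → ℝ),
      (∀ j, Differentiable ℝ (η j)) ∧
      Function.Bijective
        (fderiv ℝ (fun y => Sum.elim (fun k : Fin r => (LieD f)^[(k : ℕ)] h y)
          (fun j : Fin (n - r) => η j y)) x) ∧
      ∃ U ∈ nhds x, ∀ y ∈ U, ∀ i j, LieD (g i) (η j) y = 0 := by
  rintro ⟨η, hη, hbij, U', hU', hη0⟩
  obtain ⟨U, hU, hrel⟩ := hrel1
  -- smoothness of the iterated Lie derivatives
  have hξ : ∀ k : ℕ, ContDiff ℝ (⊤ : ℕ∞) ((LieD f)^[k] h) := by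
    intro k
    induction k with
    | zero => simpa using hh
    | succ k ih =>
      rw [Function.iterate_succ_apply']
      exact (ih.fderiv_right (by simp)).clm_apply hf
  -- component functions
  set φ : (Fin r ⊕ Fin (n - r)) → (Fin n → ℝ) → ℝ :=
    Sum.elim (fun k y => (LieD f)^[(k : ℕ)] h y) (fun j y => η j y) with hφ
  have hΦ : (fun y => Sum.elim (fun k : Fin r => (LieD f)^[(k : ℕ)] h y)
      (fun j : Fin (n - r) => η j y)) = fun y s => φ s y := by
    funext y s; cases s <;> rfl
  have hdiff : ∀ s, DifferentiableAt ℝ (φ s) x := by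
    rintro (k | j)
    · exact ((hξ k).differentiable (by simp)).differentiableAt
    · exact (hη j).differentiableAt
  set D := fderiv ℝ (fun y => Sum.elim (fun k : Fin r => (LieD f)^[(k : ℕ)] h y)
      (fun j : Fin (n - r) => η j y)) x with hD
  have hpi : D = ContinuousLinearMap.pi fun s => fderiv ℝ (φ s) x := by
    rw [hD, hΦ]; exact fderiv_pi hdiff
  set lastk : Fin r := ⟨r - 1, by omega⟩ with hlastk
  set c : Fin m → ℝ := fun i => LieD (g i) ((LieD f)^[r - 1] h) x with hc
  have key : ∀ i s, D (g i x) s = if s = Sum.inl lastk then c i else 0 := by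
    intro i s
    rw [hpi]
    rcases s with k | j
    · simp only [ContinuousLinearMap.pi_apply]
      by_cases hk : (k : ℕ) = r - 1
      · have : k = lastk := by
          apply Fin.ext; simpa [hlastk] using hk
        subst this
        simp [hc, LieD, hφ, hk]
      · have hk2 : (k : ℕ) + 2 ≤ r := by have := k.isLt; omega
        have := hrel x (mem_of_mem_nhds hU) i k hk2
        have hne : (Sum.inl k : Fin r ⊕ Fin (n - r)) ≠ Sum.inl lastk := by
          simp only [ne_eq, Sum.inl.injEq]
          intro hEq; exact hk (by simpa [hlastk] using congrArg Fin.val hEq)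
        simp only [if_neg hne]
        simpa [LieD, hφ] using this
    · have := hη0 x (mem_of_mem_nhds hU') i j
      simp only [ContinuousLinearMap.pi_apply, if_neg (by simp : (Sum.inr j : Fin r ⊕ Fin (n - r)) ≠ Sum.inl lastk)]
      simpa [LieD, hφ] using this
  set i0 : Fin m := ⟨0, by omega⟩ with hi0
  set i1 : Fin m := ⟨1, by omega⟩ with hi1
  -- pair linear independence
  have hpair : LinearIndependent ℝ ![g i0 x, g i1 x] := by
    have hinj : Function.Injective ![i0, i1] := by
      intro a b hab
      fin_cases a <;> fin_cases b <;> simp_all [hi0, hi1, Fin.ext_iff]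
    have := hind.comp ![i0, i1] hinj
    have heq : ((fun i => g i x) ∘ ![i0, i1]) = ![g i0 x, g i1 x] := by
      funext a; fin_cases a <;> rfl
    rwa [heq] at this
  -- the key linear combination
  have hcomb : c i1 • g i0 x + (-(c i0)) • g i1 x = 0 := by
    apply hbij.injective
    rw [map_zero, map_add, map_smul, map_smul]
    funext s
    simp only [Pi.add_apply, Pi.smul_apply, smul_eq_mul, Pi.zero_apply]
    rw [key, key]
    split_ifs <;> ring
  obtain ⟨hc1, hc0⟩ := LinearIndependent.pair_iff.mp hpair _ _ hcomb
  have hc0' : c i0 = 0 := by linarith [neg_eq_zero.mp hc0]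
  have hg0 : g i0 x = 0 := by
    apply hbij.injective
    rw [map_zero]
    funext s
    rw [key]
    split_ifs <;> simp [hc0']
  exact hind.ne_zero i0 hg0
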